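/- arXiv:1212.1312 — 3 statements merged into one kernel-verified Lean document; each statement's English description precedes it below -/
import Mathlib

section
/- Let n ≥ 1. Then {γ ∈ H(K_n × K_n) : H(pr_1)(γ) = e_{K_n}(β) and H(pr_2)(γ) = e_{K_n}(β)} = {e_{K_n × K_n}(α)}; that is, the only point of H(K_n × K_n) whose images under both H(pr_1) and H(pr_2) equal e_{K_n}(β) is e_{K_n × K_n}(α). -/
open scoped Topology

/-- The index set `S(X)`: triples `(φ, a, b)` with `φ : X → ℝ` continuous and
`0 ≤ a < b ≤ 1`. -/
structure SIdx (X : Type u) [TopologicalSpace X] : Type u where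
  φ : C(X, ℝ)
  a : ℝ
  b : ℝ
  ha : 0 ≤ a
  hab : a < b
  hb : b ≤ 1

/-- `α : ℝ → X` is a step function on `[0,1)`: there is a partition
`0 = t 0 < t 1 < ⋯ < t k = 1` with `α` constant on each `[t j, t (j+1))`. -/
def IsStep {X : Type u} (α : ℝ → X) : Prop :=
  ∃ (k : ℕ) (t : ℕ → ℝ), 1 ≤ k ∧ t 0 = 0 ∧ t k = 1 ∧ (∀ j < k, t j < t (j + 1)) ∧
    ∀ j < k, ∀ s ∈ Set.Ico (t j) (t (j + 1)), α s = α (t j)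

/-- The embedding `e_X`, sending `α` to the point of `∏_{S(X)} ℝ` whose
`(φ, a, b)`-coordinate is `(1/(b-a)) ∫_a^b φ(α t) dt`. -/
noncomputable def eHM {X : Type u} [TopologicalSpace X] (α : ℝ → X) : SIdx X → ℝ :=
  fun s => (1 / (s.b - s.a)) * ∫ t in s.a..s.b, s.φ (α t)

/-- `H(X)` as a subset of `∏_{S(X)} ℝ`: the closure of the image under `e_X`
of the set of step functions. -/
def HSet (X : Type u) [TopologicalSpace X] : Set (SIdx X → ℝ) :=
  closure (eHM '' {α : ℝ → X | IsStep α})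

/-- `H(X)` as a topological space (subspace of the product `∏_{S(X)} ℝ`). -/
abbrev HSp (X : Type u) [TopologicalSpace X] : Type u := ↥(HSet X)

/-- `H_X(A)`: the closure of the image under `e_X` of the step functions taking
values in `A` on `[0,1)`. -/
def HSetOn (X : Type u) [TopologicalSpace X] (A : Set X) : Set (SIdx X → ℝ) :=
  closure (eHM '' {α : ℝ → X | IsStep α ∧ ∀ t ∈ Set.Ico (0:ℝ) 1, α t ∈ A})

/-- The support of `ν`: the intersection of all closed `A ⊆ X` with `ν ∈ H_X(A)`. -/
def suppH {X : Type u} [TopologicalSpace X] (ν : SIdx X → ℝ) : Set X :=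
  ⋂₀ {A : Set X | IsClosed A ∧ ν ∈ HSetOn X A}

/-- The reindexing map `R_f : ∏_{S(X)} ℝ → ∏_{S(Y)} ℝ`, `R_f x (ψ,a,b) = x (ψ∘f,a,b)`. -/
def reindex {X : Type u} {Y : Type v} [TopologicalSpace X] [TopologicalSpace Y]
    (f : C(X, Y)) : (SIdx X → ℝ) → (SIdx Y → ℝ) :=
  fun x s => x ⟨s.φ.comp f, s.a, s.b, s.ha, s.hab, s.hb⟩

lemma isStep_comp {X : Type u} {Y : Type v} (f : X → Y) {α : ℝ → X} (h : IsStep α) :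
    IsStep (f ∘ α) := by
  obtain ⟨k, t, hk, h0, h1, hm, hc⟩ := h
  exact ⟨k, t, hk, h0, h1, hm, fun j hj s hs => congrArg f (hc j hj s hs)⟩

lemma isStep_const {X : Type u} (x : X) : IsStep (fun _ : ℝ => x) :=
  ⟨1, fun j => (j : ℝ), le_refl 1, by simp, by simp,
    fun j _ => by simp, fun _ _ _ _ => rfl⟩

/-- The point `e_X(α)` of `H(X)`, for a step function `α`. -/
noncomputable def toH {X : Type u} [TopologicalSpace X] (α : ℝ → X) (h : IsStep α) : HSp X :=
  ⟨eHM α, subset_closure ⟨α, h, rfl⟩⟩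

lemma continuous_reindex {X : Type u} {Y : Type v} [TopologicalSpace X] [TopologicalSpace Y]
    (f : C(X, Y)) : Continuous (reindex f) :=
  continuous_pi fun _ => continuous_apply _

lemma reindex_mapsTo {X : Type u} {Y : Type v} [TopologicalSpace X] [TopologicalSpace Y]
    (f : C(X, Y)) : Set.MapsTo (reindex f) (HSet X) (HSet Y) := by
  intro x hx
  have h2 := image_closure_subset_closure_image (s := eHM '' {α : ℝ → X | IsStep α})
    (continuous_reindex f)
  have h3 : reindex f '' (eHM '' {α : ℝ → X | IsStep α}) ⊆ eHM '' {α : ℝ → Y | IsStep α} := by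
    rintro _ ⟨_, ⟨α, hα, rfl⟩, rfl⟩
    exact ⟨f ∘ α, isStep_comp f hα, rfl⟩
  exact closure_mono h3 (h2 ⟨x, hx, rfl⟩)

/-- The map `H(f) : H(X) → H(Y)` induced by a continuous `f : X → Y`, i.e. the
restriction of the reindexing map `R_f`. -/
noncomputable def Hmap {X : Type u} {Y : Type v} [TopologicalSpace X] [TopologicalSpace Y]
    (f : C(X, Y)) : C(HSp X, HSp Y) where
  toFun x := ⟨reindex f x.1, reindex_mapsTo f x.2⟩
  continuous_toFun :=
    Continuous.subtype_mk ((continuous_reindex f).comp continuous_subtype_val) _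

/-- The unit `η_X : X → H(X)`, `x ↦ e_X(const x)`. -/
noncomputable def etaMap (X : Type u) [TopologicalSpace X] : C(X, HSp X) where
  toFun x := toH (fun _ : ℝ => x) (isStep_const x)
  continuous_toFun := by
    refine Continuous.subtype_mk (continuous_pi fun s => ?_) _
    simp only [eHM, intervalIntegral.integral_const]
    exact continuous_const.mul ((s.φ.continuous).const_smul (s.b - s.a))
/-- The index (0-based) of the subinterval `[i/n, (i+1)/n)` of `[0,1)` containing `s`
(as a natural number, clipped to `n - 1`). -/
noncomputable def stepIdxNat (n : ℕ) (s : ℝ) : ℕ := min ⌊s * n⌋₊ (n - 1)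

lemma stepIdxNat_eq {n j : ℕ} (hj : j < n) {s : ℝ}
    (h1 : (j : ℝ) / n ≤ s) (h2 : s < ((j : ℝ) + 1) / n) : stepIdxNat n s = j := by
  have hn : (0:ℝ) < n := by
    have : 0 < n := by omega
    exact_mod_cast this
  have h1' : (j : ℝ) ≤ s * n := by rw [div_le_iff₀ hn] at h1; exact h1
  have h2' : s * n < (j : ℝ) + 1 := by rw [lt_div_iff₀ hn] at h2; exact h2
  have hfl : ⌊s * n⌋₊ = j := by
    rw [Nat.floor_eq_iff (le_trans (Nat.cast_nonneg j) h1')]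
    exact ⟨h1', h2'⟩
  unfold stepIdxNat
  omega

lemma isStep_stepIdxNat (n : ℕ) : IsStep (stepIdxNat n) := by
  rcases Nat.eq_zero_or_pos n with rfl | hn
  · exact ⟨1, fun j => (j : ℝ), le_refl 1, by simp, by simp, fun j _ => by simp,
      fun j hj s hs => by simp [stepIdxNat]⟩
  · have hnR : (0:ℝ) < n := by exact_mod_cast hn
    refine ⟨n, fun j => (j : ℝ) / n, hn, by simp, by field_simp,
      fun j hj => ?_, fun j hj s hs => ?_⟩
    · exact (div_lt_div_iff_of_pos_right hnR).mpr (by push_cast; linarith)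
    · obtain ⟨hs1, hs2⟩ := hs
      have hs2' : s < ((j : ℝ) + 1) / n := by
        simpa using hs2
      rw [stepIdxNat_eq hj hs1 hs2',
        stepIdxNat_eq hj (le_refl _) ((div_lt_div_iff_of_pos_right hnR).mpr (by linarith))]
/-- The step function `β : [0,1) → K_n`, `β(s) = i` for `s ∈ [i/n, (i+1)/n)`,
with `K_n` realized as `Fin n` (0-based indexing). -/
noncomputable def stepIdx (n : ℕ) [NeZero n] (s : ℝ) : Fin n :=
  ⟨stepIdxNat n s, by
    have := NeZero.ne n
    unfold stepIdxNat
    omega⟩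

lemma isStep_stepIdx (n : ℕ) [NeZero n] : IsStep (stepIdx n) := by
  have hn := NeZero.ne n
  have h : stepIdx n =
      (fun m : ℕ => (⟨min m (n - 1), by omega⟩ : Fin n)) ∘ stepIdxNat n := by
    funext s
    apply Fin.ext
    simp [stepIdx, stepIdxNat, min_assoc]
  rw [h]
  exact isStep_comp _ (isStep_stepIdxNat n)

/-- The diagonal step function `α : [0,1) → K_n × K_n`, `α(s) = (i,i)` for
`s ∈ [i/n, (i+1)/n)`. -/
noncomputable def alphaDiag (n : ℕ) [NeZero n] : ℝ → Fin n × Fin n :=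
  fun s => (stepIdx n s, stepIdx n s)

lemma isStep_alphaDiag (n : ℕ) [NeZero n] : IsStep (alphaDiag n) :=
  isStep_comp (fun i : Fin n => (i, i)) (isStep_stepIdx n)

/-- The step function `α_i : [0,1) → K_n × K_n`, `α_i(s) = (i,j)` for
`s ∈ [j/n, (j+1)/n)`. -/
noncomputable def alphaRow (n : ℕ) [NeZero n] (i : Fin n) : ℝ → Fin n × Fin n :=
  fun s => (i, stepIdx n s)

lemma isStep_alphaRow (n : ℕ) [NeZero n] (i : Fin n) : IsStep (alphaRow n i) :=
  isStep_comp (fun j : Fin n => (i, j)) (isStep_stepIdx n)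

/-- The step function `A_n : [0,1) → H(K_n × K_n)`, `A_n(s) = e(α_i)` for
`s ∈ [i/n, (i+1)/n)`. -/
noncomputable def An (n : ℕ) [NeZero n] : ℝ → HSp (Fin n × Fin n) :=
  fun s => toH (alphaRow n (stepIdx n s)) (isStep_alphaRow n _)

lemma isStep_An (n : ℕ) [NeZero n] : IsStep (An n) :=
  isStep_comp (fun i : Fin n => toH (alphaRow n i) (isStep_alphaRow n i)) (isStep_stepIdx n)

/-- The step function `γ_i^{(n)} : [0,1) → D = {0,1}` which is `1` on
`[i/n, (i+1)/n)` and `0` elsewhere, with `D` realized as `Bool`. -/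
noncomputable def gammaStep (n i : ℕ) : ℝ → Bool := fun s => decide (stepIdxNat n s = i)

lemma isStep_gammaStep (n i : ℕ) : IsStep (gammaStep n i) :=
  isStep_comp (fun m : ℕ => decide (m = i)) (isStep_stepIdxNat n)

/-- The step function `B_n : [0,1) → H(D)`, `B_n(s) = e(γ_i^{(n)})` for
`s ∈ [i/n, (i+1)/n)`. -/
noncomputable def Bn (n : ℕ) : ℝ → HSp Bool :=
  fun s => toH (gammaStep n (stepIdxNat n s)) (isStep_gammaStep n _)

lemma isStep_Bn (n : ℕ) : IsStep (Bn n) :=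
  isStep_comp (fun m : ℕ => toH (gammaStep n m) (isStep_gammaStep n m)) (isStep_stepIdxNat n)

/-! For a point `γ ∈ H(X)` and an interval `[c, d]`, the functional `φ ↦ γ(φ, c, d)` is positive and
normalised, and `(d - c) * γ(φ, c, d)` is additive in the interval: both are closed conditions
satisfied by the averages `e_X(α)`, so they pass to the closure. On a block `[i/n, (i+1)/n)`
both marginals of `γ` are the point mass at `i`, and positivity then forces
`γ(φ, c, d) = φ(i, i)` on subintervals of the block, which is also the value of `e(α)` there.
Additivity over the blocks gives `γ = e(α)` on every interval. -/

open MeasureTheory Set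

theorem IsStep.integrableOn_Ico {E : Type*} [NormedAddCommGroup E] {f : ℝ → E}
    (hf : IsStep f) : IntegrableOn f (Ico 0 1) := by
  obtain ⟨k, t, -, ht0, htk, -, hconst⟩ := hf
  have hcover : Ico (0 : ℝ) 1 ⊆ ⋃ j ∈ Finset.range k, Ico (t j) (t (j + 1)) := by
    simpa [ht0, htk] using Ico_subset_biUnion_Ico k t
  refine IntegrableOn.mono_set ((integrableOn_finset_iUnion).2 fun j hj => ?_) hcover
  exact IntegrableOn.congr_fun (integrableOn_const measure_Ico_lt_top.ne)
    (fun s hs => (hconst j (Finset.mem_range.1 hj) s hs).symm) measurableSet_Ico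

theorem IsStep.intervalIntegrable {E : Type*} [NormedAddCommGroup E] {f : ℝ → E}
    (hf : IsStep f) {a b : ℝ} (ha : 0 ≤ a) (hab : a ≤ b) (hb : b ≤ 1) :
    IntervalIntegrable f volume a b := by
  have h01 : IntegrableOn f (Icc 0 1) :=
    (integrableOn_Icc_iff_integrableOn_Ico (by finiteness)).2 hf.integrableOn_Ico
  exact (h01.mono_set (uIcc_subset_Icc ⟨ha, hab.trans hb⟩ ⟨ha.trans hab, hb⟩)).intervalIntegrable

theorem eHM_mem_HSet {X : Type*} [TopologicalSpace X] {α : ℝ → X} (hα : IsStep α) :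
    eHM α ∈ HSet X :=
  subset_closure ⟨α, hα, rfl⟩

theorem eHM_of_eqOn_Ico {X : Type*} [TopologicalSpace X] {α : ℝ → X} {x : X} (φ : C(X, ℝ))
    {c d : ℝ} (hc : 0 ≤ c) (hcd : c < d) (hd : d ≤ 1) (hα : ∀ t ∈ Ico c d, α t = x) :
    eHM α ⟨φ, c, d, hc, hcd, hd⟩ = φ x := by
  have hint : ∫ t in c..d, φ (α t) = ∫ _ in c..d, φ x := by
    rw [intervalIntegral.integral_of_le hcd.le, intervalIntegral.integral_of_le hcd.le,
      ← integral_Ico_eq_integral_Ioc, ← integral_Ico_eq_integral_Ioc]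
    exact setIntegral_congr_fun measurableSet_Ico fun t ht => by rw [hα t ht]
  simp only [eHM, hint, intervalIntegral.integral_const, smul_eq_mul]
  field_simp [(sub_pos.2 hcd).ne']

theorem sum_mul_apply_le_of_mem_HSet {X : Type*} [TopologicalSpace X] {γ : SIdx X → ℝ}
    (hγ : γ ∈ HSet X) {ι : Type*} (s : Finset ι) (w : ι → ℝ) (φ : ι → C(X, ℝ)) {C : ℝ}
    (h : ∀ p, ∑ k ∈ s, w k * φ k p ≤ C) {c d : ℝ} (hc : 0 ≤ c) (hcd : c < d) (hd : d ≤ 1) :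
    ∑ k ∈ s, w k * γ ⟨φ k, c, d, hc, hcd, hd⟩ ≤ C := by
  have hclosed : IsClosed {x : SIdx X → ℝ | ∑ k ∈ s, w k * x ⟨φ k, c, d, hc, hcd, hd⟩ ≤ C} :=
    isClosed_le (continuous_finsetSum _ fun k _ => continuous_const.mul (continuous_apply _))
      continuous_const
  refine closure_minimal ?_ hclosed hγ
  rintro _ ⟨α, hα, rfl⟩
  have hint : ∀ f : X → ℝ, IntervalIntegrable (fun t => f (α t)) volume c d :=
    fun f => (isStep_comp f hα).intervalIntegrable hc hcd.le hd
  have hsum : ∑ k ∈ s, w k * ∫ t in c..d, φ k (α t) ≤ (d - c) * C := by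
    simp_rw [← intervalIntegral.integral_const_mul]
    rw [← intervalIntegral.integral_finsetSum fun k _ => (hint _).const_mul (w k)]
    calc ∫ t in c..d, ∑ k ∈ s, w k * φ k (α t) ≤ ∫ _ in c..d, C :=
          intervalIntegral.integral_mono_on hcd.le (hint fun p => ∑ k ∈ s, w k * φ k p)
            intervalIntegrable_const fun t _ => h (α t)
      _ = (d - c) * C := by rw [intervalIntegral.integral_const, smul_eq_mul]
  have hdc : 0 < d - c := sub_pos.2 hcd
  calc ∑ k ∈ s, w k * eHM α ⟨φ k, c, d, hc, hcd, hd⟩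
      = (∑ k ∈ s, w k * ∫ t in c..d, φ k (α t)) / (d - c) := by
        simp only [eHM, Finset.sum_div]
        refine Finset.sum_congr rfl fun k _ => by ring
    _ ≤ C := (div_le_iff₀' hdc).2 hsum

/-- `(d - c) * γ (φ, c, d)`, which for `γ = e_X(α)` is `∫ t in c..d, φ (α t)`; it is extended
by `0` outside `0 ≤ c < d ≤ 1`, where `(φ, c, d)` is not an index. -/
noncomputable def hIntegral {X : Type*} [TopologicalSpace X] (γ : SIdx X → ℝ) (φ : C(X, ℝ))
    (c d : ℝ) : ℝ :=
  if h : 0 ≤ c ∧ c < d ∧ d ≤ 1 then (d - c) * γ ⟨φ, c, d, h.1, h.2.1, h.2.2⟩ else 0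

section hIntegral

variable {X : Type*} [TopologicalSpace X]

theorem hIntegral_eq (γ : SIdx X → ℝ) (φ : C(X, ℝ)) {c d : ℝ} (hc : 0 ≤ c) (hcd : c < d)
    (hd : d ≤ 1) : hIntegral γ φ c d = (d - c) * γ ⟨φ, c, d, hc, hcd, hd⟩ :=
  dif_pos ⟨hc, hcd, hd⟩

theorem continuous_hIntegral (φ : C(X, ℝ)) (c d : ℝ) :
    Continuous fun γ : SIdx X → ℝ => hIntegral γ φ c d := by
  unfold hIntegral
  split_ifs
  exacts [continuous_const.mul (continuous_apply _), continuous_const]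

theorem hIntegral_eHM {α : ℝ → X} (φ : C(X, ℝ)) {c d : ℝ} (hc : 0 ≤ c) (hcd : c < d)
    (hd : d ≤ 1) : hIntegral (eHM α) φ c d = ∫ t in c..d, φ (α t) := by
  rw [hIntegral_eq _ _ hc hcd hd, eHM]
  field_simp [(sub_pos.2 hcd).ne']

theorem hIntegral_add {γ : SIdx X → ℝ} (hγ : γ ∈ HSet X) (φ : C(X, ℝ)) {c m d : ℝ}
    (hc : 0 ≤ c) (hcm : c < m) (hmd : m < d) (hd : d ≤ 1) :
    hIntegral γ φ c d = hIntegral γ φ c m + hIntegral γ φ m d := by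
  refine closure_minimal ?_ (isClosed_eq (continuous_hIntegral φ c d)
    ((continuous_hIntegral φ c m).add (continuous_hIntegral φ m d))) hγ
  rintro _ ⟨α, hα, rfl⟩
  have hm : 0 ≤ m := hc.trans hcm.le
  show hIntegral (eHM α) φ c d = hIntegral (eHM α) φ c m + hIntegral (eHM α) φ m d
  rw [hIntegral_eHM φ hc (hcm.trans hmd) hd,
    hIntegral_eHM φ hc hcm (hmd.le.trans hd), hIntegral_eHM φ hm hmd hd]
  exact (intervalIntegral.integral_add_adjacent_intervals
    ((isStep_comp φ hα).intervalIntegrable hc hcm.le (hmd.le.trans hd))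
    ((isStep_comp φ hα).intervalIntegrable hm hmd.le hd)).symm

end hIntegral

theorem eq_of_additive_of_eqOn_blocks {F G : ℝ → ℝ → ℝ} {t : ℕ → ℝ} {N : ℕ} (ht0 : t 0 ≤ 0)
    (htN : 1 ≤ t N)
    (hF : ∀ c m d, 0 ≤ c → c < m → m < d → d ≤ 1 → F c d = F c m + F m d)
    (hG : ∀ c m d, 0 ≤ c → c < m → m < d → d ≤ 1 → G c d = G c m + G m d)
    (hblock : ∀ j < N, ∀ c d, 0 ≤ c → t j ≤ c → c < d → d ≤ t (j + 1) → d ≤ 1 → F c d = G c d)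
    {c d : ℝ} (hc : 0 ≤ c) (hcd : c < d) (hd : d ≤ 1) : F c d = G c d := by
  suffices h : ∀ j ≤ N, ∀ c d, 0 ≤ c → c < d → d ≤ t j → d ≤ 1 → F c d = G c d from
    h N le_rfl c d hc hcd (hd.trans htN) hd
  intro j
  induction j with
  | zero => intro _ c d hc hcd hd _; linarith
  | succ j ih =>
    intro hj c d hc hcd hdj hd
    by_cases hjc : t j ≤ c
    · exact hblock j hj c d hc hjc hcd hdj hd
    by_cases hdj' : d ≤ t j
    · exact ih (by omega) c d hc hcd hdj' hd
    rw [not_le] at hjc hdj'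
    rw [hF c (t j) d hc hjc hdj' hd, hG c (t j) d hc hjc hdj' hd,
      ih (by omega) c (t j) hc hjc le_rfl (hdj'.le.trans hd),
      hblock j hj (t j) d (hc.trans hjc.le) le_rfl hdj' hdj hd]

theorem apply_eq_of_marginals {X Y : Type*} [TopologicalSpace X] [DiscreteTopology X]
    [CompactSpace X] [TopologicalSpace Y] [DiscreteTopology Y] [CompactSpace Y]
    {γ : SIdx (X × Y) → ℝ} (hγ : γ ∈ HSet (X × Y)) {c d : ℝ} (hc : 0 ≤ c) (hcd : c < d)
    (hd : d ≤ 1) {x : X} {y : Y}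
    (h₁ : ∀ ψ : C(X, ℝ), reindex ⟨Prod.fst, continuous_fst⟩ γ ⟨ψ, c, d, hc, hcd, hd⟩ = ψ x)
    (h₂ : ∀ ψ : C(Y, ℝ), reindex ⟨Prod.snd, continuous_snd⟩ γ ⟨ψ, c, d, hc, hcd, hd⟩ = ψ y)
    (φ : C(X × Y, ℝ)) : γ ⟨φ, c, d, hc, hcd, hd⟩ = φ (x, y) := by
  classical
  let ψ₁ : C(X × Y, ℝ) :=
    (⟨fun a => if a = x then 1 else 0, continuous_of_discreteTopology⟩ : C(X, ℝ)).comp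
      ⟨Prod.fst, continuous_fst⟩
  let ψ₂ : C(X × Y, ℝ) :=
    (⟨fun b => if b = y then 1 else 0, continuous_of_discreteTopology⟩ : C(Y, ℝ)).comp
      ⟨Prod.snd, continuous_snd⟩
  have hψ₁ : γ ⟨ψ₁, c, d, hc, hcd, hd⟩ = 1 := (h₁ _).trans (if_pos rfl)
  have hψ₂ : γ ⟨ψ₂, c, d, hc, hcd, hd⟩ = 1 := (h₂ _).trans (if_pos rfl)
  have hM : ∀ p, |φ p - φ (x, y)| ≤ 2 * ‖φ‖ := fun p => by
    have hp := φ.norm_coe_le_norm p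
    have hxy := φ.norm_coe_le_norm (x, y)
    rw [Real.norm_eq_abs] at hp hxy
    linarith [abs_sub (φ p) (φ (x, y))]
  -- Pointwise `σ φ + M ψ₁ + M ψ₂ ≤ σ φ (x, y) + 2 M` for `M = 2 ‖φ‖`; positivity of `γ` and
  -- `γ ψ₁ = γ ψ₂ = 1` turn this into `σ γ φ ≤ σ φ (x, y)`.
  have key : ∀ σ : ℝ, |σ| ≤ 1 → σ * γ ⟨φ, c, d, hc, hcd, hd⟩ ≤ σ * φ (x, y) := by
    intro σ hσ
    have hpt : ∀ p, ∑ k, ![σ, 2 * ‖φ‖, 2 * ‖φ‖] k * ![φ, ψ₁, ψ₂] k p ≤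
        σ * φ (x, y) + 2 * (2 * ‖φ‖) := by
      intro p
      have hσφ : σ * φ p ≤ σ * φ (x, y) + 2 * ‖φ‖ := by
        have := (le_abs_self _).trans ((abs_mul σ (φ p - φ (x, y))).trans_le
          (mul_le_mul hσ (hM p) (abs_nonneg _) zero_le_one))
        linarith [mul_sub σ (φ p) (φ (x, y))]
      obtain ⟨a, b⟩ := p
      simp only [Fin.sum_univ_three, Matrix.cons_val_zero, Matrix.cons_val_one, Matrix.cons_val,
        ContinuousMap.comp_apply, ContinuousMap.coe_mk, ψ₁, ψ₂]
      split_ifs with ha hb hb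
      · subst ha hb; linarith
      all_goals linarith [norm_nonneg φ]
    have := sum_mul_apply_le_of_mem_HSet hγ Finset.univ _ _ hpt hc hcd hd
    simp only [Fin.sum_univ_three, Matrix.cons_val_zero, Matrix.cons_val_one, Matrix.cons_val,
      hψ₁, hψ₂] at this
    linarith
  exact le_antisymm (by simpa using key 1 (by norm_num)) (by simpa using key (-1) (by norm_num))

theorem stepIdx_eq_of_mem {n : ℕ} [NeZero n] {j : ℕ} (hj : j < n) {s : ℝ}
    (h₁ : (j : ℝ) / n ≤ s) (h₂ : s < ((j : ℝ) + 1) / n) : stepIdx n s = ⟨j, hj⟩ :=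
  Fin.ext (stepIdxNat_eq hj h₁ h₂)

theorem eq_eHM_alphaDiag_of_marginals {n : ℕ} [NeZero n] {γ : SIdx (Fin n × Fin n) → ℝ}
    (hγ : γ ∈ HSet (Fin n × Fin n))
    (h₁ : reindex (⟨Prod.fst, continuous_fst⟩ : C(Fin n × Fin n, Fin n)) γ = eHM (stepIdx n))
    (h₂ : reindex (⟨Prod.snd, continuous_snd⟩ : C(Fin n × Fin n, Fin n)) γ = eHM (stepIdx n)) :
    γ = eHM (alphaDiag n) := by
  have hn : (0 : ℝ) < n := Nat.cast_pos.2 (NeZero.pos n)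
  funext ⟨φ, a, b, ha, hab, hb⟩
  have hblock : ∀ j < n, ∀ c d, 0 ≤ c → (j : ℝ) / n ≤ c → c < d →
      d ≤ ((j + 1 : ℕ) : ℝ) / n → d ≤ 1 →
      hIntegral γ φ c d = hIntegral (eHM (alphaDiag n)) φ c d := by
    intro j hj c d hc hjc hcd hdj hd
    have hβ : ∀ t ∈ Ico c d, stepIdx n t = ⟨j, hj⟩ := fun t ht =>
      stepIdx_eq_of_mem hj (hjc.trans ht.1) (by push_cast at hdj; linarith [ht.2])
    have hmarg : ∀ ψ : C(Fin n, ℝ), eHM (stepIdx n) ⟨ψ, c, d, hc, hcd, hd⟩ = ψ ⟨j, hj⟩ :=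
      fun ψ => eHM_of_eqOn_Ico ψ hc hcd hd hβ
    rw [hIntegral_eq _ _ hc hcd hd, hIntegral_eq _ _ hc hcd hd,
      eHM_of_eqOn_Ico φ hc hcd hd fun t ht => by rw [alphaDiag, hβ t ht],
      apply_eq_of_marginals hγ hc hcd hd (fun ψ => (congrFun h₁ _).trans (hmarg ψ))
        (fun ψ => (congrFun h₂ _).trans (hmarg ψ)) φ]
  have h := eq_of_additive_of_eqOn_blocks (t := fun j : ℕ => (j : ℝ) / n) (by simp)
    (by rw [div_self hn.ne']) (fun c m d => hIntegral_add hγ φ)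
    (fun c m d => hIntegral_add (eHM_mem_HSet (isStep_alphaDiag n)) φ) hblock ha hab hb
  rw [hIntegral_eq _ _ ha hab hb, hIntegral_eq _ _ ha hab hb] at h
  exact mul_left_cancel₀ (sub_pos.2 hab).ne' h

/-- The only point of `H(K_n × K_n)` mapped by both `H(pr_1)` and `H(pr_2)`
to `e(β)` is `e(α)`, where `α(s) = (i,i)` and `β(s) = i` on `[i/n,(i+1)/n)`. -/
theorem preimage_of_beta_is_alpha (n : ℕ) [NeZero n] :
    {γ : SIdx (Fin n × Fin n) → ℝ | γ ∈ HSet (Fin n × Fin n) ∧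
        reindex (⟨Prod.fst, continuous_fst⟩ : C(Fin n × Fin n, Fin n)) γ = eHM (stepIdx n) ∧
        reindex (⟨Prod.snd, continuous_snd⟩ : C(Fin n × Fin n, Fin n)) γ = eHM (stepIdx n)} =
      {eHM (alphaDiag n)} := by
  ext γ
  constructor
  · rintro ⟨hγ, h₁, h₂⟩
    exact eq_eHM_alphaDiag_of_marginals hγ h₁ h₂
  · rintro rfl
    exact ⟨eHM_mem_HSet (isStep_alphaDiag n), rfl, rfl⟩
end

section
/- Let X be a compact Hausdorff space, ν ∈ H(X), and B ⊆ X a closed subset. Then ν ∈ H_X(B) if and only if ν(φ, a, b) = 0 for all 0 ≤ a < b ≤ 1 and all continuous φ : X → ℝ with φ|_B ≡ 0. -/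
open scoped Topology

/-!
Necessity: the coordinate conditions are closed and hold for `e_X(α)` whenever `α` takes values
in `B`, since then `φ ∘ α` vanishes on `[0, 1)`.

Sufficiency: it is enough to match `ν` exactly on finitely many coordinates. Their endpoints cut
`[0, 1]` into cells. On a cell `[a, b]`, `φ ↦ ν(φ, a, b)` is a positive normalized linear
functional that kills the functions vanishing on `B`, so it is at least `u` whenever `φ ≥ u` on
`B`; by Hahn–Banach the vector `(ν(φᵢ, a, b))ᵢ` then lies in the convex hull of
`{(φᵢ x)ᵢ : x ∈ B}`, which is compact. A convex combination `∑ wₖ (φᵢ xₖ)ᵢ` is realized exactly by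
the step function that spends the fraction `wₖ` of the cell at `xₖ`. Gluing the cells gives a
`B`-valued step function `α` with `∫₀ᵍ φᵢ ∘ α = g ν(φᵢ, 0, g)` at every cut point `g`, and
additivity of both sides in the interval yields `e_X(α) = ν` on the chosen coordinates.
-/

open MeasureTheory Set

lemma intervalIntegrable_of_eqOn_Ico {g : ℝ → ℝ} {a b c : ℝ} (hab : a ≤ b)
    (hg : EqOn g (fun _ => c) (Ico a b)) : IntervalIntegrable g volume a b := by
  rw [intervalIntegrable_iff_integrableOn_Ioo_of_le hab]
  exact (integrableOn_const (by simp)).congr_fun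
    (fun s hs => (hg (Ioo_subset_Ico_self hs)).symm) measurableSet_Ioo

lemma integral_of_eqOn_Ico {g : ℝ → ℝ} {a b c : ℝ} (hab : a ≤ b)
    (hg : EqOn g (fun _ => c) (Ico a b)) : ∫ s in a..b, g s = (b - a) * c := by
  rw [intervalIntegral.integral_of_le hab, integral_Ioc_eq_integral_Ioo,
    setIntegral_congr_fun measurableSet_Ioo (fun s hs => hg (Ioo_subset_Ico_self hs))]
  simp [hab]

lemma IsStep.intervalIntegrable_comp {X : Type*} {α : ℝ → X} (hα : IsStep α) (f : X → ℝ)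
    {a b : ℝ} (ha : 0 ≤ a) (hab : a ≤ b) (hb : b ≤ 1) :
    IntervalIntegrable (fun s => f (α s)) volume a b := by
  obtain ⟨k, t, -, ht0, htk, hmono, hconst⟩ := hα
  have h01 : IntervalIntegrable (fun s => f (α s)) volume (t 0) (t k) :=
    IntervalIntegrable.trans_iterate fun j hj =>
      intervalIntegrable_of_eqOn_Ico (hmono j hj).le fun s hs => congrArg f (hconst j hj s hs)
  rw [ht0, htk] at h01
  exact h01.mono_set (uIcc_subset_uIcc ⟨by simp [ha], by simp; linarith⟩
    ⟨by simp; linarith, by simp [hb]⟩)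

/-- By Carathéodory, `convexHull ℝ K` is the image of the compact set `Δ × K^d`,
`d = dim E + 1`, under `(w, z) ↦ ∑ wᵢ zᵢ`. -/
theorem isCompact_convexHull {E : Type*} [NormedAddCommGroup E] [NormedSpace ℝ E]
    [FiniteDimensional ℝ E] {K : Set E} (hK : IsCompact K) : IsCompact (convexHull ℝ K) := by
  rcases K.eq_empty_or_nonempty with rfl | ⟨x₀, hx₀⟩
  · simp
  set d := Module.finrank ℝ E + 1
  suffices convexHull ℝ K = (fun p : (Fin d → ℝ) × (Fin d → E) => ∑ i, p.1 i • p.2 i) ''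
      (stdSimplex ℝ (Fin d) ×ˢ univ.pi fun _ => K) by
    rw [this]
    exact ((isCompact_stdSimplex _ _).prod (isCompact_univ_pi fun _ => hK)).image (by fun_prop)
  refine Subset.antisymm (fun x hx => ?_) ?_
  · obtain ⟨ι, _, z, w, hzK, hind, hw0, hw1, hwz⟩ := eq_pos_convex_span_of_mem_convexHull hx
    obtain ⟨e⟩ : Nonempty (ι ↪ Fin d) := Function.Embedding.nonempty_of_card_le <| by
      simpa [d] using hind.card_le_finrank_succ.trans
        (Nat.succ_le_succ (Submodule.finrank_le _))
    classical
    set w' := Function.extend e w 0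
    set z' := Function.extend e z fun _ => x₀
    have hw' : ∀ i, w' (e i) = w i := e.injective.extend_apply _ _
    have hz' : ∀ i, z' (e i) = z i := e.injective.extend_apply _ _
    have hw'0 : ∀ j ∉ range e, w' j = 0 := fun j hj => by
      simp [w', Function.extend_apply' _ _ _ (by simpa using hj)]
    have hz'0 : ∀ j ∉ range e, z' j = x₀ := fun j hj =>
      Function.extend_apply' _ _ _ (by simpa using hj)
    refine ⟨(w', z'), ⟨⟨fun j => ?_, ?_⟩, fun j _ => ?_⟩, ?_⟩ <;> dsimp only
    · by_cases hj : j ∈ range e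
      · obtain ⟨i, rfl⟩ := hj
        exact (hw' i).symm ▸ (hw0 i).le
      · exact (hw'0 j hj).ge
    · rw [← hw1]
      exact (Fintype.sum_of_injective e e.injective w w' hw'0 fun i => (hw' i).symm).symm
    · by_cases hj : j ∈ range e
      · obtain ⟨i, rfl⟩ := hj
        exact (hz' i).symm ▸ hzK (mem_range_self i)
      · exact (hz'0 j hj).symm ▸ hx₀
    · rw [← hwz]
      exact (Fintype.sum_of_injective e e.injective _ _ (fun j hj => by simp [hw'0 j hj])
        fun i => by simp [hw', hz']).symm
  · rintro _ ⟨⟨w, z⟩, ⟨hw, hz⟩, rfl⟩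
    exact (convex_convexHull ℝ K).sum_mem (fun i _ => hw.1 i) hw.2
      fun i _ => subset_convexHull ℝ K (hz i (mem_univ i))

lemma mem_closure_of_forall_finset_exists_eqOn {ι : Type*} {Y : ι → Type*}
    [∀ i, TopologicalSpace (Y i)] {S : Set (∀ i, Y i)} {x : ∀ i, Y i}
    (h : ∀ I : Finset ι, ∃ y ∈ S, ∀ i ∈ I, y i = x i) : x ∈ closure S := by
  refine mem_closure_iff.2 fun o ho hxo => ?_
  obtain ⟨I, U, hU, hsub⟩ := isOpen_pi_iff.1 ho x hxo
  obtain ⟨y, hyS, hy⟩ := h I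
  exact ⟨y, hsub fun i hi => (hy i hi).symm ▸ (hU i hi).2, hyS⟩

section Pieces

variable {X : Type*}

noncomputable def piecesLength (L : List (ℝ × X)) : ℝ := (L.map Prod.fst).sum

noncomputable def piecesIntegral (f : X → ℝ) (L : List (ℝ × X)) : ℝ :=
  (L.map fun p => p.1 * f p.2).sum

/-- A piece `(d, x)` stays at `x` for the time `d`; after the last piece the value is `x₀`. -/
noncomputable def stepOfPieces (x₀ : X) : List (ℝ × X) → ℝ → X
  | [], _ => x₀
  | p :: L, s => if s < p.1 then p.2 else stepOfPieces x₀ L (s - p.1)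

@[simp] lemma piecesLength_append (L₁ L₂ : List (ℝ × X)) :
    piecesLength (L₁ ++ L₂) = piecesLength L₁ + piecesLength L₂ := by
  simp [piecesLength]

@[simp] lemma piecesIntegral_append (f : X → ℝ) (L₁ L₂ : List (ℝ × X)) :
    piecesIntegral f (L₁ ++ L₂) = piecesIntegral f L₁ + piecesIntegral f L₂ := by
  simp [piecesIntegral]

lemma piecesLength_take_add_one (L : List (ℝ × X)) {i : ℕ} (hi : i < L.length) :
    piecesLength (L.take (i + 1)) = piecesLength (L.take i) + L[i].1 := by
  rw [List.take_add_one, List.getElem?_eq_getElem hi]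
  simp only [piecesLength, Option.toList_some, List.map_append, List.sum_append,
    List.map_singleton, List.sum_singleton]

lemma piecesIntegral_take_add_one (f : X → ℝ) (L : List (ℝ × X)) {i : ℕ} (hi : i < L.length) :
    piecesIntegral f (L.take (i + 1)) = piecesIntegral f (L.take i) + L[i].1 * f L[i].2 := by
  rw [List.take_add_one, List.getElem?_eq_getElem hi]
  simp only [piecesIntegral, Option.toList_some, List.map_append, List.sum_append,
    List.map_singleton, List.sum_singleton]

lemma piecesLength_nonneg {L : List (ℝ × X)} (hL : ∀ p ∈ L, 0 ≤ p.1) : 0 ≤ piecesLength L :=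
  List.sum_nonneg (by simpa using fun a x h => hL (a, x) h)

lemma piecesLength_take_lt {L : List (ℝ × X)} (hL : ∀ p ∈ L, 0 < p.1) {i : ℕ}
    (hi : i < L.length) : piecesLength (L.take i) < piecesLength (L.take (i + 1)) := by
  rw [piecesLength_take_add_one L hi]
  linarith [hL _ (List.getElem_mem hi)]

lemma stepOfPieces_append_of_le (x₀ : X) {L₁ : List (ℝ × X)} (hL₁ : ∀ p ∈ L₁, 0 ≤ p.1)
    (L₂ : List (ℝ × X)) {s : ℝ} (hs : piecesLength L₁ ≤ s) :
    stepOfPieces x₀ (L₁ ++ L₂) s = stepOfPieces x₀ L₂ (s - piecesLength L₁) := by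
  induction L₁ generalizing s with
  | nil => simp [piecesLength]
  | cons p L₁ ih =>
    have hL₁' : ∀ q ∈ L₁, 0 ≤ q.1 := fun q hq => hL₁ q (List.mem_cons_of_mem _ hq)
    have hlen : piecesLength (p :: L₁) = p.1 + piecesLength L₁ := by simp [piecesLength]
    rw [hlen] at hs
    rw [List.cons_append, stepOfPieces, if_neg (by linarith [piecesLength_nonneg hL₁']),
      ih hL₁' (by linarith), hlen, sub_sub]

lemma stepOfPieces_eqOn_Ico (x₀ : X) {L : List (ℝ × X)} (hL : ∀ p ∈ L, 0 < p.1) {i : ℕ}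
    (hi : i < L.length) :
    EqOn (stepOfPieces x₀ L) (fun _ => L[i].2)
      (Ico (piecesLength (L.take i)) (piecesLength (L.take (i + 1)))) := by
  intro s ⟨hs₁, hs₂⟩
  rw [piecesLength_take_add_one L hi] at hs₂
  have hsplit : L = L.take i ++ L[i] :: L.drop (i + 1) := by
    rw [← List.drop_eq_getElem_cons hi, List.take_append_drop]
  show stepOfPieces x₀ L s = L[i].2
  conv_lhs => rw [hsplit]
  rw [stepOfPieces_append_of_le x₀ (fun p hp => (hL p (List.mem_of_mem_take hp)).le) _ hs₁,
    stepOfPieces, if_pos (by linarith)]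

lemma stepOfPieces_mem (x₀ : X) {L : List (ℝ × X)} {B : Set X} (hx₀ : x₀ ∈ B)
    (hL : ∀ p ∈ L, p.2 ∈ B) (s : ℝ) : stepOfPieces x₀ L s ∈ B := by
  induction L generalizing s with
  | nil => exact hx₀
  | cons p L ih =>
    rw [stepOfPieces]
    split_ifs
    · exact hL p (List.mem_cons_self ..)
    · exact ih (fun q hq => hL q (List.mem_cons_of_mem _ hq)) _

lemma isStep_stepOfPieces (x₀ : X) {L : List (ℝ × X)} (hL : ∀ p ∈ L, 0 < p.1)
    (hlen : piecesLength L = 1) : IsStep (stepOfPieces x₀ L) := by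
  have hne : L ≠ [] := by rintro rfl; simp [piecesLength] at hlen
  refine ⟨L.length, fun i => piecesLength (L.take i), List.length_pos_iff.2 hne,
    by simp [piecesLength], by simpa using hlen, fun i hi => piecesLength_take_lt hL hi,
    fun i hi s hs => ?_⟩
  have hpiece := stepOfPieces_eqOn_Ico x₀ hL hi
  rw [hpiece hs, hpiece ⟨le_rfl, hs.1.trans_lt hs.2⟩]

lemma integral_stepOfPieces_take (x₀ : X) {L : List (ℝ × X)} (hL : ∀ p ∈ L, 0 < p.1)
    (f : X → ℝ) {n : ℕ} (hn : n ≤ L.length) :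
    ∫ s in 0..piecesLength (L.take n), f (stepOfPieces x₀ L s) =
      piecesIntegral f (L.take n) := by
  have hpiece : ∀ i (hi : i < L.length), EqOn (fun s => f (stepOfPieces x₀ L s))
      (fun _ => f (L[i]'hi).2) (Ico (piecesLength (L.take i)) (piecesLength (L.take (i + 1)))) :=
    fun i hi s hs => congrArg f (stepOfPieces_eqOn_Ico x₀ hL hi hs)
  have hmono : ∀ i < L.length, piecesLength (L.take i) ≤ piecesLength (L.take (i + 1)) :=
    fun i hi => (piecesLength_take_lt hL hi).le
  induction n with
  | zero => simp [piecesLength, piecesIntegral]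
  | succ n ih =>
    have hn' : n < L.length := hn
    have hint : IntervalIntegrable (fun s => f (stepOfPieces x₀ L s)) volume 0
        (piecesLength (L.take n)) := by
      simpa [piecesLength] using IntervalIntegrable.trans_iterate
        (a := fun i => piecesLength (L.take i)) fun i hi =>
          intervalIntegrable_of_eqOn_Ico (hmono i (by omega)) (hpiece i (by omega))
    rw [← intervalIntegral.integral_add_adjacent_intervals hint
      (intervalIntegrable_of_eqOn_Ico (hmono n hn') (hpiece n hn')), ih hn'.le,
      integral_of_eqOn_Ico (hmono n hn') (hpiece n hn'), piecesLength_take_add_one L hn',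
      piecesIntegral_take_add_one f L hn']
    ring

theorem exists_pieces_of_forall_cell {ι : Type*} {B : Set X} (f : ι → X → ℝ)
    (P : ι → ℝ → ℝ) (hP : ∀ i, P i 0 = 0)
    (hcell : ∀ a b, 0 ≤ a → a < b → b ≤ 1 → ∃ C : List (ℝ × X), (∀ p ∈ C, 0 < p.1 ∧ p.2 ∈ B) ∧
      piecesLength C = b - a ∧ ∀ i, piecesIntegral (f i) C = P i b - P i a)
    (G : Finset ℝ) (hG : ∀ g ∈ G, 0 < g ∧ g ≤ 1) :
    ∃ L : List (ℝ × X), (∀ p ∈ L, 0 < p.1 ∧ p.2 ∈ B) ∧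
      IsGreatest (insert 0 ↑G) (piecesLength L) ∧
      (∀ i, piecesIntegral (f i) L = P i (piecesLength L)) ∧
      ∀ g ∈ insert 0 G, ∃ L₁ L₂, L = L₁ ++ L₂ ∧ piecesLength L₁ = g ∧
        ∀ i, piecesIntegral (f i) L₁ = P i g := by
  classical
  induction G using Finset.induction_on_max with
  | empty =>
    refine ⟨[], by simp, by simp [piecesLength], by simp [piecesIntegral, piecesLength, hP],
      fun g hg => ⟨[], [], rfl, ?_⟩⟩
    obtain rfl : g = 0 := by simpa using hg
    simp [piecesLength, piecesIntegral, hP]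
  | insert m G hlt ih =>
    obtain ⟨L, hL, ⟨hℓG, hℓub⟩, hLint, hpre⟩ := ih fun g hg => hG g (Finset.mem_insert_of_mem hg)
    obtain ⟨hm0, hm1⟩ := hG m (Finset.mem_insert_self m G)
    have hℓm : piecesLength L < m := by
      rcases hℓG with h | h
      · exact h ▸ hm0
      · exact hlt _ h
    obtain ⟨C, hC, hClen, hCint⟩ := hcell _ m (hℓub (mem_insert _ _)) hℓm hm1
    have hlen : piecesLength (L ++ C) = m := by simp [hClen]
    have hint : ∀ i, piecesIntegral (f i) (L ++ C) = P i m := fun i => by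
      rw [piecesIntegral_append, hLint, hCint]
      ring
    refine ⟨L ++ C, fun p hp => (List.mem_append.1 hp).elim (hL p) (hC p),
      ⟨by simp [hlen], ?_⟩, fun i => hlen ▸ hint i, fun g hg => ?_⟩
    · rw [hlen]
      intro g hg
      simp only [Finset.coe_insert, Set.mem_insert_iff, Finset.mem_coe] at hg
      rcases hg with rfl | rfl | hg
      exacts [hm0.le, le_rfl, (hlt g hg).le]
    · obtain rfl | hg : g = m ∨ g ∈ insert 0 G := by
        simp only [Finset.mem_insert] at hg ⊢
        tauto
      · exact ⟨L ++ C, [], by simp, hlen, hint⟩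
      · obtain ⟨L₁, L₂, rfl, h₁, h₂⟩ := hpre g hg
        exact ⟨L₁, L₂ ++ C, by simp, h₁, h₂⟩

end Pieces

section HSet

variable {X : Type*} [TopologicalSpace X] {ν : SIdx X → ℝ}

@[elab_as_elim]
lemma HSet.induction_on {P : (SIdx X → ℝ) → Prop} (hν : ν ∈ HSet X) (hP : IsClosed {x | P x})
    (h : ∀ α, IsStep α → P (eHM α)) : P ν :=
  closure_minimal (by rintro _ ⟨α, hα, rfl⟩; exact h α hα) hP hν

noncomputable def HSet.coordLinearMap (hν : ν ∈ HSet X) {a b : ℝ} (ha : 0 ≤ a) (hab : a < b)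
    (hb : b ≤ 1) : C(X, ℝ) →ₗ[ℝ] ℝ where
  toFun φ := ν ⟨φ, a, b, ha, hab, hb⟩
  map_add' φ ψ := by
    refine HSet.induction_on hν ?_ fun α hα => ?_
    · exact isClosed_eq (by fun_prop) (by fun_prop)
    simp only [eHM, ContinuousMap.add_apply]
    rw [intervalIntegral.integral_add (hα.intervalIntegrable_comp φ ha hab.le hb)
      (hα.intervalIntegrable_comp ψ ha hab.le hb)]
    ring
  map_smul' c φ := by
    refine HSet.induction_on hν ?_ fun α hα => ?_
    · exact isClosed_eq (by fun_prop) (by fun_prop)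
    simp only [eHM, ContinuousMap.smul_apply, smul_eq_mul, intervalIntegral.integral_const_mul,
      RingHom.id_apply]
    ring

/-- For `ν = e_X(α)` this is `x ↦ ∫₀ˣ φ (α t) dt`. -/
noncomputable def coordPrimitive (ν : SIdx X → ℝ) (φ : C(X, ℝ)) (x : ℝ) : ℝ :=
  if h : 0 < x ∧ x ≤ 1 then x * ν ⟨φ, 0, x, le_rfl, h.1, h.2⟩ else 0

@[simp] lemma coordPrimitive_zero (φ : C(X, ℝ)) : coordPrimitive ν φ 0 = 0 := by
  simp [coordPrimitive]

section Interval

variable (hν : ν ∈ HSet X) {a b : ℝ} (ha : 0 ≤ a) (hab : a < b) (hb : b ≤ 1)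
include hν

lemma HSet.coord_mono {φ ψ : C(X, ℝ)} (h : φ ≤ ψ) :
    ν ⟨φ, a, b, ha, hab, hb⟩ ≤ ν ⟨ψ, a, b, ha, hab, hb⟩ := by
  refine HSet.induction_on hν ?_ fun α hα => ?_
  · exact isClosed_le (by fun_prop) (by fun_prop)
  exact mul_le_mul_of_nonneg_left (intervalIntegral.integral_mono_on hab.le
    (hα.intervalIntegrable_comp φ ha hab.le hb) (hα.intervalIntegrable_comp ψ ha hab.le hb)
    fun s _ => h (α s)) (one_div_nonneg.2 (sub_nonneg.2 hab.le))

lemma HSet.coord_const (c : ℝ) : ν ⟨ContinuousMap.const X c, a, b, ha, hab, hb⟩ = c := by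
  refine HSet.induction_on hν ?_ fun α _ => ?_
  · exact isClosed_eq (by fun_prop) (by fun_prop)
  simp only [eHM, ContinuousMap.const_apply, intervalIntegral.integral_const, smul_eq_mul]
  field_simp [(sub_pos.2 hab).ne']

lemma HSet.sub_mul_coord_eq_coordPrimitive_sub (φ : C(X, ℝ)) :
    (b - a) * ν ⟨φ, a, b, ha, hab, hb⟩ = coordPrimitive ν φ b - coordPrimitive ν φ a := by
  rcases ha.eq_or_lt with rfl | ha₀
  · simp [coordPrimitive, hab, hb]
  rw [coordPrimitive, dif_pos ⟨ha₀.trans hab, hb⟩, coordPrimitive, dif_pos ⟨ha₀, hab.le.trans hb⟩]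
  refine HSet.induction_on hν ?_ fun α hα => ?_
  · exact isClosed_eq (by fun_prop) (by fun_prop)
  simp only [eHM, sub_zero]
  rw [← intervalIntegral.integral_interval_sub_left
    (hα.intervalIntegrable_comp φ le_rfl (ha₀.trans hab).le hb)
    (hα.intervalIntegrable_comp φ le_rfl ha₀.le (hab.le.trans hb))]
  field_simp [(sub_pos.2 hab).ne', ha₀.ne', (ha₀.trans hab).ne']

variable {B : Set X} (hz : ∀ ψ : C(X, ℝ), (∀ x ∈ B, ψ x = 0) → ν ⟨ψ, a, b, ha, hab, hb⟩ = 0)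
include hz

lemma HSet.le_coord_of_le_on {φ : C(X, ℝ)} {u : ℝ} (hφ : ∀ x ∈ B, u ≤ φ x) :
    u ≤ ν ⟨φ, a, b, ha, hab, hb⟩ := by
  set ψ := φ ⊔ ContinuousMap.const X u
  have hψφ : ν ⟨ψ, a, b, ha, hab, hb⟩ = ν ⟨φ, a, b, ha, hab, hb⟩ := by
    rw [← sub_eq_zero]
    refine (map_sub (HSet.coordLinearMap hν ha hab hb) ψ φ).symm.trans (hz _ fun x hx => ?_)
    simp [ψ, hφ x hx]
  calc u = ν ⟨ContinuousMap.const X u, a, b, ha, hab, hb⟩ := (HSet.coord_const hν ha hab hb u).symm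
    _ ≤ ν ⟨ψ, a, b, ha, hab, hb⟩ := HSet.coord_mono hν ha hab hb le_sup_right
    _ = ν ⟨φ, a, b, ha, hab, hb⟩ := hψφ

theorem HSet.coords_mem_convexHull [CompactSpace X] (hB : IsClosed B) {ι : Type*} [Fintype ι]
    (φ : ι → C(X, ℝ)) :
    (fun i => ν ⟨φ i, a, b, ha, hab, hb⟩) ∈ convexHull ℝ ((fun x i => φ i x) '' B) := by
  classical
  by_contra hv
  have hK := isCompact_convexHull (hB.isCompact.image (continuous_pi fun i => (φ i).continuous))
  obtain ⟨f, u, hfv, hfK⟩ :=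
    geometric_hahn_banach_point_closed (convex_convexHull ℝ _) hK.isClosed hv
  have hf : ∀ y : ι → ℝ, f y = ∑ i, y i * f (fun j => if i = j then 1 else 0) := fun y => by
    simpa using LinearMap.pi_apply_eq_sum_univ f.toLinearMap y
  set ψ : C(X, ℝ) := ∑ i, f (fun j => if i = j then 1 else 0) • φ i
  have hψ : ∀ x, ψ x = f fun i => φ i x := fun x => by
    simp [ψ, hf (fun i => φ i x), mul_comm]
  have hνψ : ν ⟨ψ, a, b, ha, hab, hb⟩ = f fun i => ν ⟨φ i, a, b, ha, hab, hb⟩ := by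
    change HSet.coordLinearMap hν ha hab hb ψ = _
    simp only [ψ, map_sum, map_smul, smul_eq_mul, hf fun i => ν ⟨φ i, a, b, ha, hab, hb⟩,
      mul_comm]
    rfl
  have := HSet.le_coord_of_le_on hν ha hab hb hz (φ := ψ) (u := u) fun x hx =>
    (hψ x).symm ▸ (hfK _ (subset_convexHull ℝ _ (mem_image_of_mem _ hx))).le
  linarith

theorem HSet.exists_pieces_eq_coordPrimitive_sub [CompactSpace X] (hB : IsClosed B) {ι : Type*}
    [Fintype ι] (φ : ι → C(X, ℝ)) :
    ∃ C : List (ℝ × X), (∀ p ∈ C, 0 < p.1 ∧ p.2 ∈ B) ∧ piecesLength C = b - a ∧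
      ∀ i, piecesIntegral (φ i) C = coordPrimitive ν (φ i) b - coordPrimitive ν (φ i) a := by
  obtain ⟨κ, _, z, w, hzK, -, hw0, hw1, hwz⟩ :=
    eq_pos_convex_span_of_mem_convexHull (HSet.coords_mem_convexHull hν ha hab hb hz hB φ)
  choose q hqB hqz using fun k => hzK (mem_range_self k)
  refine ⟨Finset.univ.toList.map fun k => ((b - a) * w k, q k), ?_, ?_, fun i => ?_⟩
  · simpa using fun k => ⟨mul_pos (sub_pos.2 hab) (hw0 k), hqB k⟩
  · simp [piecesLength, Finset.sum_map_toList, ← Finset.mul_sum, hw1]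
  · have hi := congrFun hwz i
    simp only [Finset.sum_apply, Pi.smul_apply, smul_eq_mul, ← hqz] at hi
    rw [← HSet.sub_mul_coord_eq_coordPrimitive_sub hν ha hab hb, ← hi]
    simp [piecesIntegral, Finset.sum_map_toList, Finset.mul_sum, mul_assoc]

end Interval

lemma HSet.eHM_eq_of_integral_eq_coordPrimitive (hν : ν ∈ HSet X) {α : ℝ → X} (hα : IsStep α)
    (s : SIdx X) (ha : ∫ t in 0..s.a, s.φ (α t) = coordPrimitive ν s.φ s.a)
    (hb : ∫ t in 0..s.b, s.φ (α t) = coordPrimitive ν s.φ s.b) : eHM α s = ν s := by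
  obtain ⟨φ, a, b, ha₀, hab, hb₁⟩ := s
  simp only [eHM]
  rw [← intervalIntegral.integral_interval_sub_left
    (hα.intervalIntegrable_comp φ le_rfl (ha₀.trans hab.le) hb₁)
    (hα.intervalIntegrable_comp φ le_rfl ha₀ (hab.le.trans hb₁)), ha, hb,
    ← HSet.sub_mul_coord_eq_coordPrimitive_sub hν ha₀ hab hb₁ φ]
  field_simp [(sub_pos.2 hab).ne']

noncomputable def cutPoints (I : Finset (SIdx X)) : Finset ℝ :=
  (insert 1 (I.image SIdx.a ∪ I.image SIdx.b)).filter (0 < ·)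

lemma mem_cutPoints {I : Finset (SIdx X)} {g : ℝ} (hg : g ∈ cutPoints I) : 0 < g ∧ g ≤ 1 := by
  simp only [cutPoints, Finset.mem_filter, Finset.mem_insert, Finset.mem_union,
    Finset.mem_image] at hg
  obtain ⟨rfl | ⟨s, -, rfl⟩ | ⟨s, -, rfl⟩, hg₀⟩ := hg
  exacts [⟨hg₀, le_rfl⟩, ⟨hg₀, s.hab.le.trans s.hb⟩, ⟨hg₀, s.hb⟩]

lemma one_mem_cutPoints {I : Finset (SIdx X)} : 1 ∈ cutPoints I :=
  Finset.mem_filter.2 ⟨Finset.mem_insert_self _ _, zero_lt_one⟩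

lemma a_mem_cutPoints {I : Finset (SIdx X)} {s : SIdx X} (hs : s ∈ I) :
    s.a ∈ insert 0 (cutPoints I) := by
  rcases s.ha.eq_or_lt with h | h
  · exact h ▸ Finset.mem_insert_self _ _
  · exact Finset.mem_insert_of_mem (Finset.mem_filter.2 ⟨Finset.mem_insert_of_mem
      (Finset.mem_union_left _ (Finset.mem_image_of_mem _ hs)), h⟩)

lemma b_mem_cutPoints {I : Finset (SIdx X)} {s : SIdx X} (hs : s ∈ I) :
    s.b ∈ insert 0 (cutPoints I) :=
  Finset.mem_insert_of_mem (Finset.mem_filter.2 ⟨Finset.mem_insert_of_mem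
    (Finset.mem_union_right _ (Finset.mem_image_of_mem _ hs)), s.ha.trans_lt s.hab⟩)

theorem HSet.exists_isStep_eqOn [CompactSpace X] (hν : ν ∈ HSet X) {B : Set X}
    (hB : IsClosed B)
    (hz : ∀ (φ : C(X, ℝ)) (a b : ℝ) (ha : 0 ≤ a) (hab : a < b) (hb : b ≤ 1),
      (∀ x ∈ B, φ x = 0) → ν ⟨φ, a, b, ha, hab, hb⟩ = 0)
    (I : Finset (SIdx X)) :
    ∃ α : ℝ → X, IsStep α ∧ (∀ t ∈ Ico (0 : ℝ) 1, α t ∈ B) ∧ ∀ s ∈ I, eHM α s = ν s := by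
  obtain ⟨L, hL, ⟨hℓG, hℓ⟩, -, hpre⟩ := exists_pieces_of_forall_cell
    (fun s : I => (s : SIdx X).φ) (fun s => coordPrimitive ν (s : SIdx X).φ)
    (fun _ => coordPrimitive_zero _)
    (fun a b ha hab hb => HSet.exists_pieces_eq_coordPrimitive_sub hν ha hab hb
      (fun ψ hψ => hz ψ a b ha hab hb hψ) hB _) (cutPoints I) fun _ => mem_cutPoints
  have hℓ1 : piecesLength L = 1 := by
    refine le_antisymm ?_ (hℓ (mem_insert_of_mem _ one_mem_cutPoints))
    rcases hℓG with h | h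
    · linarith
    · exact (mem_cutPoints h).2
  obtain ⟨p, hp⟩ : ∃ p, p ∈ L :=
    L.exists_mem_of_ne_nil (by rintro rfl; simp [piecesLength] at hℓ1)
  have hα := isStep_stepOfPieces p.2 (fun q hq => (hL q hq).1) hℓ1
  refine ⟨stepOfPieces p.2 L, hα,
    fun t _ => stepOfPieces_mem p.2 (hL p hp).2 (fun q hq => (hL q hq).2) t, fun s hs => ?_⟩
  have hprim : ∀ g ∈ insert 0 (cutPoints I), ∫ t in 0..g, s.φ (stepOfPieces p.2 L t) =
      coordPrimitive ν s.φ g := by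
    intro g hg
    obtain ⟨L₁, L₂, rfl, rfl, hint⟩ := hpre g hg
    rw [← hint ⟨s, hs⟩]
    simpa using integral_stepOfPieces_take p.2 (fun q hq => (hL q hq).1) s.φ
      (n := L₁.length) (by simp)
  exact HSet.eHM_eq_of_integral_eq_coordPrimitive hν hα s (hprim _ (a_mem_cutPoints hs))
    (hprim _ (b_mem_cutPoints hs))

end HSet

lemma coord_eq_zero_of_mem_HSetOn {X : Type*} [TopologicalSpace X] {B : Set X}
    {ν : SIdx X → ℝ} (hν : ν ∈ HSetOn X B) {φ : C(X, ℝ)} (hφ : ∀ x ∈ B, φ x = 0) {a b : ℝ}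
    (ha : 0 ≤ a) (hab : a < b) (hb : b ≤ 1) : ν ⟨φ, a, b, ha, hab, hb⟩ = 0 := by
  refine closure_minimal ?_ (isClosed_eq (continuous_apply _) continuous_const) hν
  rintro _ ⟨α, ⟨-, hαB⟩, rfl⟩
  show 1 / (b - a) * ∫ t in a..b, φ (α t) = 0
  rw [integral_of_eqOn_Ico hab.le (c := 0)
    fun t ht => hφ _ (hαB t ⟨ha.trans ht.1, ht.2.trans_le hb⟩)]
  simp

theorem mem_HSetOn_iff_coords_zero_general {X : Type u} [TopologicalSpace X] [CompactSpace X]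
    (ν : SIdx X → ℝ) (hν : ν ∈ HSet X) (B : Set X) (hB : IsClosed B) :
    ν ∈ HSetOn X B ↔
      ∀ (φ : C(X, ℝ)) (a b : ℝ) (ha : 0 ≤ a) (hab : a < b) (hb : b ≤ 1),
        (∀ x ∈ B, φ x = 0) → ν ⟨φ, a, b, ha, hab, hb⟩ = 0 := by
  refine ⟨fun hνB φ a b ha hab hb hφ => coord_eq_zero_of_mem_HSetOn hνB hφ ha hab hb,
    fun hz => mem_closure_of_forall_finset_exists_eqOn fun I => ?_⟩
  obtain ⟨α, hα, hαB, hαI⟩ := HSet.exists_isStep_eqOn hν hB hz I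
  exact ⟨eHM α, ⟨α, ⟨hα, hαB⟩, rfl⟩, hαI⟩

/-- `ν ∈ H_X(B)` iff all coordinates of `ν` at functions vanishing on `B` are zero. -/
theorem mem_HSetOn_iff_coords_zero {X : Type u} [TopologicalSpace X] [CompactSpace X]
    [T2Space X] (ν : SIdx X → ℝ) (hν : ν ∈ HSet X) (B : Set X) (hB : IsClosed B) :
    ν ∈ HSetOn X B ↔
      ∀ (φ : C(X, ℝ)) (a b : ℝ) (ha : 0 ≤ a) (hab : a < b) (hb : b ≤ 1),
        (∀ x ∈ B, φ x = 0) → ν ⟨φ, a, b, ha, hab, hb⟩ = 0 :=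
  mem_HSetOn_iff_coords_zero_general ν hν B hB
end

section
/- Let f : X → Y be a continuous map between compact Hausdorff spaces and define R_f : ∏_{S(X)} ℝ → ∏_{S(Y)} ℝ by R_f(x)(ψ, a, b) = x(ψ∘f, a, b). Then R_f is continuous, R_f(e_X(α)) = e_Y(f∘α) for every α ∈ HM(X), and R_f maps H(X) into H(Y). -/
open scoped Topology

theorem reindex_continuous_comm_mapsTo_general {X : Type u} {Y : Type v}
    [TopologicalSpace X] [TopologicalSpace Y] (f : C(X, Y)) :
    Continuous (reindex f) ∧
      (∀ α : ℝ → X, IsStep α → reindex f (eHM α) = eHM (f ∘ α)) ∧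
      Set.MapsTo (reindex f) (HSet X) (HSet Y) :=
  ⟨continuous_reindex f, fun _ _ => rfl, reindex_mapsTo f⟩

/-- The reindexing map `R_f` is continuous, intertwines `e_X` and `e_Y`
(`R_f (e_X α) = e_Y (f ∘ α)` for step functions `α`), and maps `H(X)` into `H(Y)`. -/
theorem reindex_continuous_comm_mapsTo {X : Type u} {Y : Type v}
    [TopologicalSpace X] [CompactSpace X] [T2Space X]
    [TopologicalSpace Y] [CompactSpace Y] [T2Space Y] (f : C(X, Y)) :
    Continuous (reindex f) ∧
      (∀ α : ℝ → X, IsStep α → reindex f (eHM α) = eHM (f ∘ α)) ∧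
      Set.MapsTo (reindex f) (HSet X) (HSet Y) :=
  reindex_continuous_comm_mapsTo_general f
end
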